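/- arXiv:2006.07799 — 2 statements merged into one kernel-verified Lean document; each statement's English description precedes it below -/
import Mathlib

section
/- Let q ≥ 1 be an integer and λ_∞ as in the context; write x_∞(θ) = λ_∞(e^{iθ}) (which is real for all real θ). Then there exists a constant L₂ > 0, depending only on q, such that x_∞(θ) ≤ -L₂·θ² for all θ ∈ [-π, π]. -/
/-- Optimal centered finite-difference coefficients for the second derivative on
the stencil `{-q, …, q}`. -/
noncomputable def bCoef (q : ℕ) (k : ℤ) : ℝ :=
  if k = 0 then
    -∑ j ∈ Finset.Icc 1 q, 2 / (j : ℝ) ^ 2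
  else
    -(2 * (-1 : ℝ) ^ k / (k : ℝ) ^ 2) *
      ((Nat.factorial q * Nat.factorial q : ℕ) : ℝ) /
      ((Nat.factorial ((q : ℤ) + k).toNat * Nat.factorial ((q : ℤ) - k).toNat : ℕ) : ℝ)

/-- The symbol `λ_∞(s) = Σ_{k=-q}^{q} b_k s^k` of the diffusion discretization. -/
noncomputable def lamInf (q : ℕ) (s : ℂ) : ℂ :=
  ∑ k ∈ Finset.Icc (-(q : ℤ)) (q : ℤ), (bCoef q k : ℂ) * s ^ k

/-!
The symbols telescope in `q`: since `b_k^{(q)} / b_k^{(q-1)} = q² / (q² - k²)` for `0 < |k| < q`,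
`λ_q(s) - λ_{q-1}(s) = -2 / (q² C(2q, q)) · Σ_k (-1)^k C(2q, q + k) s^k`
`                    = -2 / (q² C(2q, q)) · ((1 - s)² / (-s))^q`,
hence `λ_q(s) = -Σ_{m=1}^q 2 / (m² C(2m, m)) · ((1 - s)² / (-s))^m`. On the unit circle
`(1 - s)² / (-s) = 2 - 2 cos θ ≥ 0`, so all terms have the same sign and the `m = 1` term alone
gives `x_∞(θ) ≤ -(2 - 2 cos θ) ≤ -4θ²/π²`, by `cos θ ≤ 1 - 2θ²/π²` on `[-π, π]`.
-/

open Finset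
open scoped Nat

noncomputable def factorialRatio (q : ℕ) (k : ℤ) : ℝ :=
  (q ! * q ! : ℝ) / (((q : ℤ) + k).toNat ! * ((q : ℤ) - k).toNat !)

lemma bCoef_zero (q : ℕ) : bCoef q 0 = -∑ j ∈ Icc 1 q, 2 / (j : ℝ) ^ 2 := if_pos rfl

lemma bCoef_of_ne_zero (q : ℕ) {k : ℤ} (hk : k ≠ 0) :
    bCoef q k = -(2 * (-1) ^ k / (k : ℝ) ^ 2) * factorialRatio q k := by
  rw [bCoef, if_neg hk, factorialRatio]
  push_cast
  ring

lemma factorialRatio_zero_right (q : ℕ) : factorialRatio q 0 = 1 := by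
  simp [factorialRatio, Nat.factorial_ne_zero]

lemma factorialRatio_eq_choose {q : ℕ} {k : ℤ} (hk : k.natAbs ≤ q) :
    factorialRatio q k = ((2 * q).choose ((q : ℤ) + k).toNat : ℝ) / (2 * q).choose q := by
  obtain ⟨a, ha⟩ : ∃ a : ℕ, ((q : ℤ) + k).toNat = a := ⟨_, rfl⟩
  obtain ⟨b, hb⟩ : ∃ b : ℕ, ((q : ℤ) - k).toNat = b := ⟨_, rfl⟩
  have hab : 2 * q = a + b := by omega
  rw [factorialRatio, ha, hb, hab, Nat.cast_add_choose, show a + b = q + q by omega,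
    Nat.cast_add_choose]
  field_simp

lemma factorialRatio_succ {q : ℕ} {k : ℤ} (hk : k.natAbs ≤ q) :
    (((q : ℝ) + 1) ^ 2 - k ^ 2) * factorialRatio (q + 1) k
      = ((q : ℝ) + 1) ^ 2 * factorialRatio q k := by
  obtain ⟨a, ha⟩ := Int.eq_ofNat_of_zero_le (show 0 ≤ (q : ℤ) + k by omega)
  obtain ⟨b, hb⟩ := Int.eq_ofNat_of_zero_le (show 0 ≤ (q : ℤ) - k by omega)
  have ha' : ((q + 1 : ℕ) : ℤ) + k = (a + 1 : ℕ) := by push_cast; omega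
  have hb' : ((q + 1 : ℕ) : ℤ) - k = (b + 1 : ℕ) := by push_cast; omega
  have hak : (a : ℝ) = q + k := by exact_mod_cast ha.symm
  have hbk : (b : ℝ) = q - k := by exact_mod_cast hb.symm
  simp only [factorialRatio, ha, hb, ha', hb', Int.toNat_natCast, Nat.factorial_succ]
  push_cast
  field_simp
  rw [hak, hbk]
  ring

lemma bCoef_succ (q : ℕ) {k : ℤ} (hk : k.natAbs ≤ q + 1) :
    bCoef (q + 1) k = (if k.natAbs ≤ q then bCoef q k else 0)
      - 2 * (-1) ^ k / ((q : ℝ) + 1) ^ 2 * factorialRatio (q + 1) k := by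
  rcases eq_or_ne k 0 with rfl | hk0
  · rw [bCoef_zero, bCoef_zero, Int.natAbs_zero, if_pos (Nat.zero_le q),
      sum_Icc_succ_top (Nat.le_add_left 1 q), factorialRatio_zero_right, zpow_zero]
    push_cast
    ring
  rw [bCoef_of_ne_zero _ hk0]
  split_ifs with hkq
  · rw [bCoef_of_ne_zero _ hk0]
    have hR := factorialRatio_succ hkq
    have hk2 : (k : ℝ) ^ 2 ≠ 0 := by positivity
    field_simp
    linear_combination (-1 : ℝ) * hR
  · have hk2 : (k : ℝ) ^ 2 = ((q : ℝ) + 1) ^ 2 := by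
      have h := Int.natAbs_sq k
      rw [show k.natAbs = q + 1 by omega] at h
      exact_mod_cast h.symm
    rw [hk2]
    ring

lemma sum_Icc_neg_eq_sum_range {M : Type*} [AddCommMonoid M] (q : ℕ) (f : ℤ → M) :
    ∑ k ∈ Icc (-(q : ℤ)) q, f k = ∑ j ∈ range (2 * q + 1), f (j - q) := by
  refine sum_nbij' (fun k ↦ (k + q).toNat) (fun j ↦ (j : ℤ) - q) ?_ ?_ ?_ ?_ ?_ <;>
    intro k hk <;> simp only [mem_Icc, mem_range] at hk ⊢
  all_goals first | omega | (congr 1; omega)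

lemma sum_choose_mul_zpow {K : Type*} [Field K] (q : ℕ) {z : K} (hz : z ≠ 0) :
    ∑ k ∈ Icc (-(q : ℤ)) q, ((2 * q).choose ((q : ℤ) + k).toNat : K) * z ^ k
      = (1 + z) ^ (2 * q) / z ^ q := by
  rw [sum_Icc_neg_eq_sum_range, add_comm 1 z, add_pow, sum_div]
  refine sum_congr rfl fun j hj ↦ ?_
  rw [show ((q : ℤ) + (j - q)).toNat = j by omega, zpow_sub₀ hz, zpow_natCast, zpow_natCast]
  ring

lemma lamInf_succ (q : ℕ) {s : ℂ} (hs : s ≠ 0) :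
    lamInf (q + 1) s = lamInf q s
      - 2 / (((q : ℂ) + 1) ^ 2 * (2 * (q + 1)).choose (q + 1))
        * ((1 - s) ^ (2 * (q + 1)) / (-s) ^ (q + 1)) := by
  have hsplit : lamInf (q + 1) s = ∑ k ∈ Icc (-((q + 1 : ℕ) : ℤ)) (q + 1 : ℕ),
      ((if k ∈ Icc (-(q : ℤ)) q then (bCoef q k : ℂ) * s ^ k else 0)
        - 2 / ((q : ℂ) + 1) ^ 2 * ((factorialRatio (q + 1) k : ℂ) * (-s) ^ k)) := by
    refine sum_congr rfl fun k hk ↦ ?_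
    rw [mem_Icc] at hk
    rw [bCoef_succ q (by omega)]
    simp only [mem_Icc, show (-(q : ℤ) ≤ k ∧ k ≤ q) ↔ k.natAbs ≤ q by omega]
    rw [neg_eq_neg_one_mul s, mul_zpow]
    split_ifs <;> push_cast <;> ring
  have hlower : ∑ k ∈ Icc (-((q + 1 : ℕ) : ℤ)) (q + 1 : ℕ),
      (if k ∈ Icc (-(q : ℤ)) q then (bCoef q k : ℂ) * s ^ k else 0) = lamInf q s := by
    rw [sum_ite_mem, inter_eq_right.2 (Icc_subset_Icc (by omega) (by omega)), lamInf]
  have hbinom : ∑ k ∈ Icc (-((q + 1 : ℕ) : ℤ)) (q + 1 : ℕ),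
      (factorialRatio (q + 1) k : ℂ) * (-s) ^ k
        = (1 - s) ^ (2 * (q + 1)) / (-s) ^ (q + 1) / (2 * (q + 1)).choose (q + 1) := by
    have h := sum_choose_mul_zpow (q + 1) (neg_ne_zero.2 hs)
    rw [← sub_eq_add_neg] at h
    rw [← h, sum_div]
    refine sum_congr rfl fun k hk ↦ ?_
    rw [factorialRatio_eq_choose (by rw [mem_Icc] at hk; omega)]
    push_cast
    ring
  rw [hsplit, sum_sub_distrib, hlower, ← mul_sum, hbinom]
  field_simp

theorem lamInf_eq_neg_sum (q : ℕ) {s : ℂ} (hs : s ≠ 0) :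
    lamInf q s
      = -∑ m ∈ Icc 1 q, 2 / ((m : ℂ) ^ 2 * (2 * m).choose m) * ((1 - s) ^ 2 / -s) ^ m := by
  induction q with
  | zero => simp [lamInf, bCoef]
  | succ q ih =>
    rw [lamInf_succ q hs, ih, sum_Icc_succ_top (Nat.le_add_left 1 q), div_pow, ← pow_mul]
    push_cast
    ring

lemma one_sub_exp_sq_div (θ : ℝ) :
    (1 - Complex.exp (θ * Complex.I)) ^ 2 / -Complex.exp (θ * Complex.I)
      = ((2 - 2 * Real.cos θ : ℝ) : ℂ) := by
  have hcos : 2 * Complex.cos θ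
      = Complex.exp (θ * Complex.I) + (Complex.exp (θ * Complex.I))⁻¹ := by
    rw [Complex.cos, ← Complex.exp_neg]
    ring_nf
  have hs := Complex.exp_ne_zero (θ * Complex.I)
  push_cast
  rw [hcos]
  field_simp
  ring

lemma lamInf_exp_mul_I (q : ℕ) (θ : ℝ) :
    lamInf q (Complex.exp (θ * Complex.I))
      = ((-∑ m ∈ Icc 1 q,
            2 / ((m : ℝ) ^ 2 * (2 * m).choose m) * (2 - 2 * Real.cos θ) ^ m : ℝ) : ℂ) := by
  rw [lamInf_eq_neg_sum q (Complex.exp_ne_zero _), one_sub_exp_sq_div]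
  push_cast
  rfl

lemma neg_sum_le_neg_self {u : ℝ} (hu : 0 ≤ u) {q : ℕ} (hq : 1 ≤ q) :
    -∑ m ∈ Icc 1 q, 2 / ((m : ℝ) ^ 2 * (2 * m).choose m) * u ^ m ≤ -u := by
  have h := single_le_sum (f := fun m : ℕ ↦ 2 / ((m : ℝ) ^ 2 * (2 * m).choose m) * u ^ m)
    (fun m _ ↦ by positivity) (mem_Icc.2 ⟨le_rfl, hq⟩)
  norm_num at h
  linarith

/-- Quadratic upper bound on the diffusion symbol: there is `L₂ > 0`
(depending only on `q`) with `x_∞(θ) ≤ -L₂·θ²` on `[-π, π]`. -/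
theorem lamInf_quadratic_bound (q : ℕ) (hq : 1 ≤ q) :
    ∃ L₂ > (0 : ℝ), ∀ θ ∈ Set.Icc (-Real.pi) Real.pi,
      (lamInf q (Complex.exp (θ * Complex.I))).re ≤ -(L₂ * θ ^ 2) := by
  refine ⟨4 / Real.pi ^ 2, by positivity, fun θ hθ ↦ ?_⟩
  have hcos := Real.cos_le_one_sub_mul_cos_sq (abs_le.2 hθ)
  have hu : 0 ≤ 2 - 2 * Real.cos θ := by linarith [Real.cos_le_one θ]
  rw [lamInf_exp_mul_I, Complex.ofReal_re]
  calc _ ≤ -(2 - 2 * Real.cos θ) := neg_sum_le_neg_self hu hq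
    _ ≤ _ := by linarith [show 4 / Real.pi ^ 2 * θ ^ 2 = 2 * (2 / Real.pi ^ 2 * θ ^ 2) by ring]
end

section
/- Let l, r ≥ 0 be integers with r + 1 ≤ l ≤ r + 2, and let λ₀ be as in the context. Let p : ℂ → ℂ be a polynomial for which there exists ε₀ > 0 such that |p(z)| ≤ 1 for all z ∈ ℂ with |z| < ε₀ and Re z < 0. Then there exists α₀ > 0, depending only on l, r and ε₀, such that for every μ > 0 with α₀·μ < 1 one has |p(μ·λ₀(e^{iθ}))| ≤ 1 for all 0 < θ < 2π. (Hence the corresponding fully-discretized method for the advection equation is stable under the Courant condition α₀·δt/h < 1.) -/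
/-!
The weights `a_k` form the differentiation rule `f'(0) ≈ Σ a_k f(k)` that is exact on polynomials
of degree `≤ l + r`: `a_k` is the derivative at `0` of the Lagrange basis polynomial of the node
`k` (for `k = 0` a logarithmic derivative, whence the harmonic sum). The basis polynomials sum to
`1`, so `Σ a_k = 0`, i.e. `λ₀(1) = 0`.

By the binomial theorem `Σ k a_k s^k = 1 - (-1)^l s^(-l) (1 - s)^(l+r) / C(l+r, l)`, and this is
`i` times the `θ`-derivative of `λ₀(e^{iθ})`. When `l - r ∈ {1, 2}` its real part integrates to
`Re λ₀(e^{iθ}) = -(2 sin(θ/2))^(2l) / (2l C(l+r, l))`, negative for `0 < θ < 2π`. As moreover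
`|λ₀(e^{iθ})| ≤ Σ |a_k|`, the choice `α₀ = (Σ |a_k| + 1) / ε₀` puts `μ λ₀(e^{iθ})` into the
half-disk.
-/

/-- Optimal finite-difference coefficients for the first derivative on the
stencil `{-l, …, r}`. -/
noncomputable def aCoef (l r : ℕ) (k : ℤ) : ℝ :=
  if k = 0 then
    -∑ ν ∈ (Finset.Icc (-(l : ℤ)) (r : ℤ)).erase 0, (1 : ℝ) / (ν : ℝ)
  else
    -((-1 : ℝ) ^ k / (k : ℝ)) *
      ((Nat.factorial l * Nat.factorial r : ℕ) : ℝ) /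
      ((Nat.factorial ((l : ℤ) + k).toNat * Nat.factorial ((r : ℤ) - k).toNat : ℕ) : ℝ)

/-- The symbol `λ₀(s) = -Σ_{k=-l}^{r} a_k s^k` of the advection discretization. -/
noncomputable def lam0 (l r : ℕ) (s : ℂ) : ℂ :=
  -∑ k ∈ Finset.Icc (-(l : ℤ)) (r : ℤ), (aCoef l r k : ℂ) * s ^ k

open Finset Nat Polynomial Complex

theorem prod_Ico_sub_eq_factorial {R : Type*} [CommRing R] {a c : ℤ} (hac : a ≤ c) :
    ∏ j ∈ Ico a c, ((c : R) - j) = ((c - a).toNat ! : R) := by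
  rw [← prod_range_add_one_eq_factorial, Nat.cast_prod]
  symm
  refine prod_nbij' (fun i => c - 1 - i) (fun j => (c - 1 - j).toNat) ?_ ?_ ?_ ?_ ?_ <;>
    intro x hx <;> simp only [mem_range, mem_Ico] at hx ⊢
  all_goals first | omega | push_cast; ring

theorem prod_Ioc_sub_eq_neg_one_pow_mul_factorial {R : Type*} [CommRing R] {c b : ℤ}
    (hcb : c ≤ b) :
    ∏ j ∈ Ioc c b, ((c : R) - j) = (-1) ^ (b - c).toNat * ((b - c).toNat ! : R) := by
  have hneg := prod_neg (s := range (b - c).toNat) fun i => ((i + 1 : ℕ) : R)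
  rw [card_range] at hneg
  rw [← prod_range_add_one_eq_factorial, Nat.cast_prod, ← hneg]
  symm
  refine prod_nbij' (fun i => c + 1 + i) (fun j => (j - c - 1).toNat) ?_ ?_ ?_ ?_ ?_ <;>
    intro x hx <;> simp only [mem_range, mem_Ioc] at hx ⊢
  all_goals first | omega | push_cast; ring

theorem prod_Icc_erase_sub {R : Type*} [CommRing R] {a b c : ℤ} (hac : a ≤ c) (hcb : c ≤ b) :
    ∏ j ∈ (Icc a b).erase c, ((c : R) - j) =
      (-1) ^ (b - c).toNat * (c - a).toNat ! * (b - c).toNat ! := by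
  have hsplit : (Icc a b).erase c = Ico a c ∪ Ioc c b := by
    ext j; simp only [mem_erase, mem_Icc, mem_union, mem_Ico, mem_Ioc]; omega
  have hdisj : Disjoint (Ico a c) (Ioc c b) :=
    disjoint_left.2 fun j hj hj' => by simp only [mem_Ico, mem_Ioc] at hj hj'; omega
  rw [hsplit, prod_union hdisj, prod_Ico_sub_eq_factorial hac,
    prod_Ioc_sub_eq_neg_one_pow_mul_factorial hcb]
  ring

namespace Lagrange

variable {F ι : Type*} [Field F] [DecidableEq ι] {s : Finset ι} {v : ι → F} {i k : ι}

theorem basis_eq_C_nodalWeight_mul_nodal_erase :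
    Lagrange.basis s v i = C (nodalWeight s v i) * nodal (s.erase i) v := by
  simp_rw [Lagrange.basis, basisDivisor, nodalWeight, prod_mul_distrib, map_prod, nodal]

theorem eval_derivative_basis_of_ne (hk : k ∈ s) (hki : k ≠ i) :
    (derivative (Lagrange.basis s v i)).eval (v k) =
      nodalWeight s v i * ∏ j ∈ (s.erase i).erase k, (v k - v j) := by
  rw [basis_eq_C_nodalWeight_mul_nodal_erase, derivative_C_mul, eval_mul, eval_C,
    eval_nodal_derivative_eval_node_eq (mem_erase.2 ⟨hki, hk⟩), eval_nodal]

theorem eval_derivative_basis_self (hvs : Set.InjOn v s) (hi : i ∈ s) :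
    (derivative (Lagrange.basis s v i)).eval (v i) = ∑ j ∈ s.erase i, (v i - v j)⁻¹ := by
  rw [basis_eq_C_nodalWeight_mul_nodal_erase, derivative_C_mul, eval_mul, eval_C,
    derivative_nodal, eval_finsetSum, mul_sum]
  have hne : ∀ j ∈ s.erase i, v i - v j ≠ 0 := fun j hj =>
    sub_ne_zero.2 fun h => (mem_erase.1 hj).1 (hvs (mem_of_mem_erase hj) hi h.symm)
  refine sum_congr rfl fun j hj => ?_
  have hrest : ∏ m ∈ (s.erase i).erase j, (v i - v m) ≠ 0 :=
    prod_ne_zero_iff.2 fun m hm => hne m (mem_of_mem_erase hm)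
  rw [nodalWeight, eval_nodal, ← mul_prod_erase _ (fun m => (v i - v m)⁻¹) hj, prod_inv_distrib,
    mul_assoc, inv_mul_cancel₀ hrest, mul_one]

theorem sum_eval_derivative_basis (hvs : Set.InjOn v s) (hs : s.Nonempty) (x : F) :
    ∑ i ∈ s, (derivative (Lagrange.basis s v i)).eval x = 0 := by
  rw [← eval_finsetSum, ← derivative_sum, sum_basis hvs hs, derivative_one, eval_zero]

end Lagrange

theorem aCoef_eq_eval_derivative_basis (l r : ℕ) {k : ℤ} (hk : k ∈ Icc (-(l : ℤ)) r) :
    aCoef l r k = (derivative (Lagrange.basis (Icc (-(l : ℤ)) r) ((↑) : ℤ → ℝ) k)).eval 0 := by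
  rw [← Int.cast_zero (R := ℝ)]
  by_cases hk0 : k = 0
  · subst hk0
    rw [aCoef, if_pos rfl, Lagrange.eval_derivative_basis_self Int.cast_injective.injOn hk]
    simp [sum_neg_distrib]
  have h0 : (0 : ℤ) ∈ Icc (-(l : ℤ)) r := by simp
  have hk' := mem_Icc.1 hk
  have hnum := mul_prod_erase _ (fun j : ℤ => ((0 : ℤ) : ℝ) - j) (mem_erase.2 ⟨hk0, hk⟩)
  rw [prod_Icc_erase_sub (mem_Icc.1 h0).1 (mem_Icc.1 h0).2] at hnum
  have hden := prod_Icc_erase_sub (R := ℝ) hk'.1 hk'.2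
  have hsign : (-1 : ℝ) ^ r = (-1) ^ k * (-1) ^ (r - k).toNat := by
    rw [← zpow_natCast, ← zpow_natCast, ← zpow_add₀ (by norm_num), Int.toNat_of_nonneg (by omega)]
    ring_nf
  rw [Lagrange.eval_derivative_basis_of_ne h0 (Ne.symm hk0), Lagrange.nodalWeight,
    prod_inv_distrib, hden, erase_right_comm, aCoef, if_neg hk0]
  simp only [Int.cast_zero, zero_sub, sub_zero, sub_neg_eq_add, zero_add, Int.toNat_natCast]
    at hnum ⊢
  have hkR : (k : ℝ) ≠ 0 := Int.cast_ne_zero.2 hk0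
  have hprod :
      ∏ j ∈ ((Icc (-(l : ℤ)) r).erase 0).erase k, -(j : ℝ) = (-1) ^ r * l ! * r ! / -k := by
    rw [eq_div_iff (neg_ne_zero.2 hkR)]
    linear_combination hnum
  rw [hprod, hsign, add_comm k]
  push_cast
  field_simp

theorem sum_aCoef (l r : ℕ) : ∑ k ∈ Icc (-(l : ℤ)) r, aCoef l r k = 0 := by
  rw [sum_congr rfl fun k hk => aCoef_eq_eval_derivative_basis l r hk]
  exact Lagrange.sum_eval_derivative_basis Int.cast_injective.injOn ⟨0, by simp⟩ 0

theorem lam0_one (l r : ℕ) : lam0 l r 1 = 0 := by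
  simp [lam0, ← Complex.ofReal_sum, sum_aCoef]

theorem natCast_sub_mul_aCoef {l r j : ℕ} (hj : j ≤ l + r) (hjl : j ≠ l) :
    ((j : ℝ) - l) * aCoef l r (j - l) = -(-1) ^ (j + l) * (l + r).choose j / (l + r).choose l := by
  have hk : (j : ℤ) - l ≠ 0 := by omega
  have hjR : (j : ℝ) - l ≠ 0 := sub_ne_zero.2 (Nat.cast_injective.ne hjl)
  have hsign : (-1 : ℝ) ^ ((j : ℤ) - l) = (-1) ^ (j + l) := by
    rw [zpow_sub₀ (by norm_num), zpow_natCast, zpow_natCast, div_eq_mul_inv, ← inv_pow, inv_neg,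
      inv_one, ← pow_add]
  have hchoose_j := congrArg (Nat.cast (R := ℝ)) (Nat.choose_mul_factorial_mul_factorial hj)
  have hchoose_l :=
    congrArg (Nat.cast (R := ℝ)) (Nat.choose_mul_factorial_mul_factorial (le_add_right l r))
  rw [Nat.add_sub_cancel_left] at hchoose_l
  rw [aCoef, if_neg hk, hsign, show ((l : ℤ) + (j - l)).toNat = j by omega,
    show ((r : ℤ) - (j - l)).toNat = l + r - j by omega]
  push_cast at hchoose_j hchoose_l ⊢
  have hB : ((l + r).choose l : ℝ) ≠ 0 := Nat.cast_ne_zero.2 (Nat.choose_pos (le_add_right l r)).ne'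
  field_simp
  linear_combination hchoose_j - hchoose_l

theorem sum_mul_aCoef_mul_zpow (l r : ℕ) {s : ℂ} (hs : s ≠ 0) :
    ∑ k ∈ Icc (-(l : ℤ)) r, (k : ℂ) * aCoef l r k * s ^ k =
      1 - (-1) ^ l * s ^ (-(l : ℤ)) * (1 - s) ^ (l + r) / (l + r).choose l := by
  have hB : ((l + r).choose l : ℂ) ≠ 0 := Nat.cast_ne_zero.2 (Nat.choose_pos (le_add_right l r)).ne'
  have hterm : ∀ j ∈ range (l + r + 1),
      (((j : ℤ) - l : ℤ) : ℂ) * aCoef l r (j - l) * s ^ ((j : ℤ) - l) =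
        (if j = l then 1 else 0) -
          (-1) ^ l * s ^ (-(l : ℤ)) * ((-s) ^ j * (l + r).choose j) / (l + r).choose l := by
    intro j hj
    have hzpow : s ^ ((j : ℤ) - l) = s ^ j * s ^ (-(l : ℤ)) := by
      rw [sub_eq_add_neg, zpow_add₀ hs, zpow_natCast]
    by_cases hjl : j = l
    · subst hjl
      rw [if_pos rfl, sub_self, Int.cast_zero, zero_mul, zero_mul, zpow_neg, zpow_natCast]
      field_simp
      rw [← mul_pow]
      ring
    · have h := congrArg (Complex.ofReal) (natCast_sub_mul_aCoef (mem_range_succ_iff.1 hj) hjl)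
      push_cast at h
      rw [pow_add] at h
      rw [if_neg hjl, hzpow, neg_pow]
      push_cast
      linear_combination (s ^ j * s ^ (-(l : ℤ))) * h
  have hreindex : ∑ k ∈ Icc (-(l : ℤ)) r, (k : ℂ) * aCoef l r k * s ^ k =
      ∑ j ∈ range (l + r + 1), (((j : ℤ) - l : ℤ) : ℂ) * aCoef l r (j - l) * s ^ ((j : ℤ) - l) := by
    refine sum_nbij' (fun k => (k + l).toNat) (fun j => (j : ℤ) - l) ?_ ?_ ?_ ?_ ?_ <;>
      intro x hx <;> simp only [mem_range, mem_Icc] at hx ⊢ <;> first | omega | congr <;> omega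
  rw [hreindex, sum_congr rfl hterm, sum_sub_distrib, sum_ite_eq', if_pos (by simp), ← sum_div,
    ← mul_sum, show (1 - s) = -s + 1 by ring, add_pow]
  simp only [one_pow, mul_one]

theorem neg_one_pow_mul_exp_zpow_mul_one_sub_exp_pow (θ : ℝ) {l n d : ℕ} (h : n + d = 2 * l) :
    (-1) ^ l * exp (θ * I) ^ (-(l : ℤ)) * (1 - exp (θ * I)) ^ n =
      (2 * Real.sin (θ / 2)) ^ n * (Real.sin (θ / 2) + Real.cos (θ / 2) * I) ^ d := by
  set σ := Real.sin (θ / 2)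
  set κ := Real.cos (θ / 2)
  obtain ⟨u, hu_def⟩ : ∃ u : ℂ, u = σ + κ * I := ⟨_, rfl⟩
  rw [← hu_def]
  have hP : ((σ ^ 2 + κ ^ 2 : ℝ) : ℂ) = 1 := by rw [Real.sin_sq_add_cos_sq]; simp
  push_cast at hP
  have hs : exp (θ * I) = ((κ ^ 2 - σ ^ 2 : ℝ) : ℂ) + ((2 * σ * κ : ℝ) : ℂ) * I := by
    rw [exp_mul_I, ← ofReal_cos, ← ofReal_sin, show θ = 2 * (θ / 2) by ring, Real.cos_two_mul',
      Real.sin_two_mul]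
  have hsu : exp (θ * I) * u ^ 2 = -1 := by
    rw [hs, hu_def]; push_cast
    linear_combination (-(1 + σ ^ 2 + κ ^ 2 : ℂ)) * hP +
      (4 * σ ^ 2 * κ ^ 2 + κ ^ 4 - κ ^ 2 * σ ^ 2 + 2 * κ ^ 3 * σ * I) * I_sq
  have hu : u ≠ 0 := by rintro hu; simp [hu] at hsu
  have hsinv : (exp (θ * I))⁻¹ = -u ^ 2 := inv_eq_of_mul_eq_one_right (by linear_combination -hsu)
  have hsub : 1 - exp (θ * I) = 2 * σ * u⁻¹ := by
    rw [eq_mul_inv_iff_mul_eq₀ hu, hs, hu_def]; push_cast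
    linear_combination (σ - κ * I) * hP - 2 * σ * κ ^ 2 * I_sq
  rw [zpow_neg, zpow_natCast, ← inv_pow, hsinv, hsub, ← mul_pow, neg_one_mul, neg_neg, ← pow_mul,
    ← h, pow_add, mul_pow, inv_pow]
  field_simp

theorem hasDerivAt_lam0_exp_mul_I (l r : ℕ) (θ : ℝ) :
    HasDerivAt (fun t : ℝ => lam0 l r (exp (t * I)))
      (-I * ∑ k ∈ Icc (-(l : ℤ)) r, (k : ℂ) * aCoef l r k * exp (θ * I) ^ k) θ := by
  have hexp : HasDerivAt (fun t : ℝ => exp (t * I)) (exp (θ * I) * I) θ := by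
    simpa using (((hasDerivAt_id (θ : ℂ)).mul_const I).cexp).comp_ofReal
  have hsum := HasDerivAt.fun_sum (u := Icc (-(l : ℤ)) r) fun k _ =>
    ((hasDerivAt_zpow k _ (Or.inl (exp_ne_zero (θ * I)))).comp θ hexp).const_mul (aCoef l r k : ℂ)
  refine hsum.neg.congr_deriv ?_
  rw [neg_mul, mul_sum]
  refine congrArg _ (sum_congr rfl fun k _ => ?_)
  rw [zpow_sub_one₀ (exp_ne_zero _)]
  field_simp

theorem hasDerivAt_re_lam0_exp_mul_I {l r : ℕ} (h₁ : r + 1 ≤ l) (h₂ : l ≤ r + 2) (θ : ℝ) :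
    HasDerivAt (fun t : ℝ => (lam0 l r (exp (t * I))).re)
      (-(2 * Real.sin (θ / 2)) ^ (2 * l - 1) * Real.cos (θ / 2) / (l + r).choose l) θ := by
  refine (reCLM.hasFDerivAt.comp_hasDerivAt θ (hasDerivAt_lam0_exp_mul_I l r θ)).congr_deriv ?_
  obtain ⟨d, hd, hd12⟩ : ∃ d, l + r + d = 2 * l ∧ (d = 1 ∨ d = 2) := ⟨l - r, by omega, by omega⟩
  have hre : ∀ (c : ℝ) (w : ℂ), (-I * (1 - c * w)).re = -c * w.im := by
    intro c w; simp [Complex.mul_re, Complex.mul_im]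
  rw [reCLM_apply, sum_mul_aCoef_mul_zpow l r (exp_ne_zero _),
    neg_one_pow_mul_exp_zpow_mul_one_sub_exp_pow θ hd, mul_div_right_comm,
    ← ofReal_natCast, ← ofReal_ofNat, ← ofReal_mul, ← ofReal_pow, ← ofReal_div, hre,
    show 2 * l - 1 = l + r + (d - 1) by omega, pow_add]
  -- `Im ((sin (θ/2) + i cos (θ/2)) ^ d) = (2 sin (θ/2)) ^ (d - 1) cos (θ/2)` only for `d = 1, 2`
  rcases hd12 with rfl | rfl
  · simp only [pow_one, add_im, ofReal_im, mul_im, ofReal_re, I_re, I_im]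
    ring
  · simp only [pow_two, add_im, add_re, ofReal_im, mul_im, mul_re, ofReal_re, I_re, I_im]
    ring

theorem re_lam0_exp_mul_I {l r : ℕ} (h₁ : r + 1 ≤ l) (h₂ : l ≤ r + 2) (θ : ℝ) :
    (lam0 l r (exp (θ * I))).re =
      -(2 * Real.sin (θ / 2)) ^ (2 * l) / (2 * l * (l + r).choose l) := by
  have hB : ((l + r).choose l : ℝ) ≠ 0 := Nat.cast_ne_zero.2 (Nat.choose_pos (le_add_right l r)).ne'
  have hl : (l : ℝ) ≠ 0 := Nat.cast_ne_zero.2 (by omega)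
  have hG : ∀ t : ℝ,
      HasDerivAt (fun t => (2 * Real.sin (t / 2)) ^ (2 * l) / (2 * l * (l + r).choose l))
      ((2 * Real.sin (t / 2)) ^ (2 * l - 1) * Real.cos (t / 2) / (l + r).choose l) t := by
    intro t
    refine ((((Real.hasDerivAt_sin (t / 2)).comp t ((hasDerivAt_id t).div_const 2)).const_mul
      2).pow (2 * l) |>.div_const _).congr_deriv ?_
    simp only [Function.comp_apply, id]
    field_simp
    push_cast [Nat.cast_sub (by omega : 1 ≤ 2 * l)]
    ring
  have hconst : ∀ t : ℝ, HasDerivAt (fun t : ℝ => (lam0 l r (exp (t * I))).re +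
      (2 * Real.sin (t / 2)) ^ (2 * l) / (2 * l * (l + r).choose l)) 0 t := fun t : ℝ =>
    ((hasDerivAt_re_lam0_exp_mul_I h₁ h₂ t).add (hG t)).congr_deriv (by ring)
  have h := is_const_of_deriv_eq_zero (fun t => (hconst t).differentiableAt)
    (fun t => (hconst t).deriv) θ 0
  simp only [ofReal_zero, zero_mul, exp_zero, lam0_one, zero_re, zero_div, Real.sin_zero, mul_zero,
    zero_add] at h
  rw [zero_pow (by omega), zero_div] at h
  rw [neg_div]
  linarith

theorem re_lam0_exp_mul_I_neg {l r : ℕ} (h₁ : r + 1 ≤ l) (h₂ : l ≤ r + 2) {θ : ℝ} (hθ : 0 < θ)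
    (hθ' : θ < 2 * Real.pi) : (lam0 l r (exp (θ * I))).re < 0 := by
  have hsin : 0 < Real.sin (θ / 2) := Real.sin_pos_of_pos_of_lt_pi (by linarith) (by linarith)
  have hl : (0 : ℝ) < l := by exact_mod_cast (by omega : 0 < l)
  have hB : (0 : ℝ) < (l + r).choose l := by exact_mod_cast Nat.choose_pos (le_add_right l r)
  rw [re_lam0_exp_mul_I h₁ h₂, neg_div, neg_lt_zero]
  positivity

theorem norm_lam0_le (l r : ℕ) {s : ℂ} (hs : ‖s‖ = 1) :
    ‖lam0 l r s‖ ≤ ∑ k ∈ Icc (-(l : ℤ)) r, |aCoef l r k| := by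
  rw [lam0, norm_neg]
  refine (norm_sum_le _ _).trans_eq (sum_congr rfl fun k _ => ?_)
  rw [norm_mul, norm_zpow, hs, one_zpow, mul_one, norm_real, Real.norm_eq_abs]

/-- If the stability region of a time-integrator contains a left half-disk
`{z : |z| < ε₀, Re z < 0}`, then combining it with any stable upwind-biased
spatial discretization of the advection equation yields a conditionally stable
method: there is `α₀ > 0` such that `|p(μ·λ₀(e^{iθ}))| ≤ 1` whenever
`α₀·μ < 1`. -/
theorem halfdisk_stability_region_conditionally_stable (l r : ℕ)
    (h1 : r + 1 ≤ l) (h2 : l ≤ r + 2) (p : Polynomial ℂ) (ε₀ : ℝ) (hε : 0 < ε₀)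
    (hp : ∀ z : ℂ, ‖z‖ < ε₀ → z.re < 0 → ‖p.eval z‖ ≤ 1) :
    ∃ α₀ > (0 : ℝ), ∀ μ : ℝ, 0 < μ → α₀ * μ < 1 →
      ∀ θ : ℝ, 0 < θ → θ < 2 * Real.pi →
        ‖p.eval ((μ : ℂ) * lam0 l r (Complex.exp (θ * Complex.I)))‖ ≤ 1 := by
  set M := ∑ k ∈ Icc (-(l : ℤ)) r, |aCoef l r k|
  have hM : 0 ≤ M := sum_nonneg fun k _ => abs_nonneg _
  refine ⟨(M + 1) / ε₀, by positivity, fun μ hμ hα θ hθ hθ' => hp _ ?_ ?_⟩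
  · rw [div_mul_eq_mul_div, div_lt_one hε] at hα
    calc ‖(μ : ℂ) * lam0 l r (exp (θ * I))‖ = μ * ‖lam0 l r (exp (θ * I))‖ := by
          rw [norm_mul, norm_real, Real.norm_of_nonneg hμ.le]
      _ ≤ μ * M := mul_le_mul_of_nonneg_left (norm_lam0_le l r (norm_exp_ofReal_mul_I θ)) hμ.le
      _ < ε₀ := by linarith
  · rw [re_ofReal_mul]
    exact mul_neg_of_pos_of_neg hμ (re_lam0_exp_mul_I_neg h1 h2 hθ hθ')
end
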